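/- Suppose a, b ∈ O_K^× and the quadratic form ⟨1,-a,-b,ab⟩ is anisotropic over K (i.e. ℍ[K,a,b] is a division ring). Then the quadratic form ⟨1,-ā,-b̄,āb̄⟩ is anisotropic over the residue field k: for all (e₀,e₁,e₂,e₃) ∈ k⁴ not all zero, e₀² - ā·e₁² - b̄·e₂² + ā·b̄·e₃² ≠ 0. Consequently the residue algebra ℍ[k,ā,b̄] is a division ring. -/

import Mathlib

noncomputable section

/-- A surjective discrete valuation `ν : K → ℤ` on a field `K`
(the value of `ν` at `0` is irrelevant: only nonzero elements are constrained). -/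
structure DVal (K : Type) [Field K] : Type where
  ν : K → ℤ
  ν_mul : ∀ x y : K, x ≠ 0 → y ≠ 0 → ν (x * y) = ν x + ν y
  ν_add : ∀ x y : K, x ≠ 0 → y ≠ 0 → x + y ≠ 0 → min (ν x) (ν y) ≤ ν (x + y)
  ν_one : ν 1 = 0
  ν_surj : ∀ n : ℤ, ∃ x : K, x ≠ 0 ∧ ν x = n

namespace DVal

variable {K : Type} [Field K]

/-- `x` belongs to the valuation ring `O_K`. -/
def Int (V : DVal K) (x : K) : Prop := x = 0 ∨ 0 ≤ V.ν x

/-- `x` is a unit of the valuation ring `O_K`. -/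
def IntUnit (V : DVal K) (x : K) : Prop := x ≠ 0 ∧ V.ν x = 0

/-- `x` belongs to the maximal ideal `m_K` of the valuation ring `O_K`. -/
def MaxIdeal (V : DVal K) (x : K) : Prop := x = 0 ∨ 1 ≤ V.ν x

/-- `K` is complete with respect to the valuation `ν`: every Cauchy sequence converges. -/
def IsComplete (V : DVal K) : Prop :=
  ∀ f : ℕ → K,
    (∀ M : ℤ, ∃ N : ℕ, ∀ m n : ℕ, N ≤ m → N ≤ n →
      f m - f n = 0 ∨ M ≤ V.ν (f m - f n)) →
    ∃ L : K, ∀ M : ℤ, ∃ N : ℕ, ∀ n : ℕ, N ≤ n →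
      f n - L = 0 ∨ M ≤ V.ν (f n - L)

/-- The residue field `k = O_K/m_K` has characteristic different from `2`,
i.e. `2` is a unit of the valuation ring `O_K`. -/
def ResCharNeTwo (V : DVal K) : Prop := (2 : K) ≠ 0 ∧ V.ν 2 = 0

end DVal

/-- The reduced norm of a quaternion `u = δ + αx + βy + γz ∈ ℍ[K,a,b]`:
`Nrd u = u·τ(u) = δ² - aα² - bβ² + abγ²`. -/
def qnrd {K : Type} [Field K] (a b : K) (u : QuaternionAlgebra K a 0 b) : K :=
  u.re ^ 2 - a * u.imI ^ 2 - b * u.imJ ^ 2 + a * b * u.imK ^ 2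

/-- The canonical involution `τ(δ + αx + βy + γz) = δ - αx - βy - γz` of `ℍ[K,a,b]`. -/
def qtau {K : Type} [Field K] {a b : K} (u : QuaternionAlgebra K a 0 b) :
    QuaternionAlgebra K a 0 b :=
  ⟨u.re, -u.imI, -u.imJ, -u.imK⟩

/-- The norm form `⟨1,-a,-b,ab⟩` of `ℍ[K,a,b]` is anisotropic over `K`
(equivalently, `ℍ[K,a,b]` is a division ring). -/
def QAniso {K : Type} [Field K] (a b : K) : Prop :=
  ∀ d e f g : K, d ^ 2 - a * e ^ 2 - b * f ^ 2 + a * b * g ^ 2 = 0 →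
    d = 0 ∧ e = 0 ∧ f = 0 ∧ g = 0

/-- The valuation `ν_D(u) = (1/2)·ν_K(Nrd u)` of the quaternion division algebra
`D = ℍ[K,a,b]` (at nonzero `u`). -/
def qnu {K : Type} [Field K] (V : DVal K) (a b : K) (u : QuaternionAlgebra K a 0 b) : ℚ :=
  (V.ν (qnrd a b u) : ℚ) / 2

/-! If some lift `eᵢ` is a unit, solving `Q(e) = 0` for the `i`-th coordinate asks for a
root of `αᵢ y² + rᵢ` with `αᵢ ∈ {1, -a, -b, ab}` a unit, and `Q(e) ∈ 𝔪_K` says that `eᵢ` is a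
unit root of `y² = -rᵢ/αᵢ` modulo `𝔪_K`. As `2` is a unit, Newton's iteration
`x ↦ x + (c - x²)/(2x)` gains a power of `𝔪_K` at each step, so by completeness it converges to
an exact root `y ≠ 0`; replacing `eᵢ` by `y` gives a nontrivial zero of `⟨1,-a,-b,ab⟩` over `K`.
-/

namespace DVal

variable {K : Type} [Field K] (V : DVal K)

lemma ν_neg_one : V.ν (-1 : K) = 0 := by
  have h := V.ν_mul (-1 : K) (-1) (by norm_num) (by norm_num)
  rw [neg_mul_neg, one_mul, V.ν_one] at h
  omega

lemma ν_neg {x : K} (hx : x ≠ 0) : V.ν (-x) = V.ν x := by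
  rw [← neg_one_mul, V.ν_mul _ _ (by norm_num) hx, ν_neg_one, zero_add]

lemma ν_inv {x : K} (hx : x ≠ 0) : V.ν x⁻¹ = -V.ν x := by
  have h := V.ν_mul x x⁻¹ hx (inv_ne_zero hx)
  rw [mul_inv_cancel₀ hx, V.ν_one] at h
  omega

/-- `x ∈ 𝔪_K ^ M`, a fractional ideal when `M ≤ 0`. -/
def ValGe (M : ℤ) (x : K) : Prop := x = 0 ∨ M ≤ V.ν x

variable {V}

lemma valGe_zero (M : ℤ) : V.ValGe M 0 := Or.inl rfl

lemma ValGe.mono {M M' : ℤ} {x : K} (h : M' ≤ M) (hx : V.ValGe M x) : V.ValGe M' x :=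
  hx.imp id h.trans

lemma ValGe.neg {M : ℤ} {x : K} (hx : V.ValGe M x) : V.ValGe M (-x) := by
  by_cases hx0 : x = 0
  · simp [hx0, valGe_zero]
  · exact Or.inr ((V.ν_neg hx0).symm ▸ hx.resolve_left hx0)

lemma ValGe.add {M : ℤ} {x y : K} (hx : V.ValGe M x) (hy : V.ValGe M y) :
    V.ValGe M (x + y) := by
  by_cases hx0 : x = 0
  · simpa [hx0] using hy
  by_cases hy0 : y = 0
  · simpa [hy0] using hx
  by_cases hxy : x + y = 0
  · exact Or.inl hxy
  have := V.ν_add x y hx0 hy0 hxy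
  exact Or.inr (le_min (hx.resolve_left hx0) (hy.resolve_left hy0) |>.trans this)

lemma ValGe.sub {M : ℤ} {x y : K} (hx : V.ValGe M x) (hy : V.ValGe M y) :
    V.ValGe M (x - y) := by
  simpa only [sub_eq_add_neg] using hx.add hy.neg

lemma ValGe.mul {M M' : ℤ} {x y : K} (hx : V.ValGe M x) (hy : V.ValGe M' y) :
    V.ValGe (M + M') (x * y) := by
  by_cases hx0 : x = 0
  · simp [hx0, valGe_zero]
  by_cases hy0 : y = 0
  · simp [hy0, valGe_zero]
  refine Or.inr ?_
  rw [V.ν_mul x y hx0 hy0]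
  exact add_le_add (hx.resolve_left hx0) (hy.resolve_left hy0)

lemma ValGe.div_of_intUnit {M : ℤ} {x c : K} (hx : V.ValGe M x) (hc : V.IntUnit c) :
    V.ValGe M (x / c) := by
  by_cases hx0 : x = 0
  · simp [hx0, valGe_zero]
  refine Or.inr ?_
  rw [div_eq_mul_inv, V.ν_mul x c⁻¹ hx0 (inv_ne_zero hc.1), V.ν_inv hc.1, hc.2]
  simpa using hx.resolve_left hx0

lemma eq_zero_of_forall_valGe {x : K} (h : ∀ M, V.ValGe M x) : x = 0 :=
  (h (V.ν x + 1)).resolve_right fun hx => by omega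

lemma IntUnit.valGe_zero {x : K} (hx : V.IntUnit x) : V.ValGe 0 x := Or.inr hx.2.ge

lemma IntUnit.not_valGe_one {x : K} (hx : V.IntUnit x) : ¬ V.ValGe 1 x := by
  rintro (h | h)
  · exact hx.1 h
  · have := hx.2; omega

lemma IntUnit.of_int_of_not_maxIdeal {x : K} (hx : V.Int x) (hm : ¬ V.MaxIdeal x) :
    V.IntUnit x := by
  simp only [DVal.MaxIdeal, not_or, not_le] at hm
  exact ⟨hm.1, by have := hx.resolve_left hm.1; omega⟩

lemma intUnit_one : V.IntUnit (1 : K) := ⟨one_ne_zero, V.ν_one⟩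

lemma IntUnit.neg {x : K} (hx : V.IntUnit x) : V.IntUnit (-x) :=
  ⟨neg_ne_zero.mpr hx.1, (V.ν_neg hx.1).trans hx.2⟩

lemma IntUnit.mul {x y : K} (hx : V.IntUnit x) (hy : V.IntUnit y) : V.IntUnit (x * y) :=
  ⟨mul_ne_zero hx.1 hy.1, by rw [V.ν_mul x y hx.1 hy.1, hx.2, hy.2, add_zero]⟩

lemma IntUnit.add_of_valGe_one {x y : K} (hx : V.IntUnit x) (hy : V.ValGe 1 y) :
    V.IntUnit (x + y) := by
  have hsum : V.ValGe 0 (x + y) := hx.valGe_zero.add (hy.mono zero_le_one)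
  have hne : x + y ≠ 0 := fun h =>
    hx.not_valGe_one (by simpa [eq_neg_of_add_eq_zero_left h] using hy.neg)
  refine ⟨hne, le_antisymm ?_ (hsum.resolve_left hne)⟩
  by_contra! hlt
  exact hx.not_valGe_one (by simpa using ValGe.sub (Or.inr hlt) hy)

def sqrtNewtonStep (c x : K) : K := x + (c - x ^ 2) / (2 * x)

lemma valGe_sqrtNewtonStep_sub {c x : K} {t : ℤ} (h2 : V.IntUnit (2 : K)) (hx : V.IntUnit x)
    (hxc : V.ValGe t (x ^ 2 - c)) : V.ValGe t (sqrtNewtonStep c x - x) := by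
  rw [sqrtNewtonStep, add_sub_cancel_left, ← neg_sub]
  exact hxc.neg.div_of_intUnit (h2.mul hx)

lemma valGe_sq_sqrtNewtonStep_sub {c x : K} {t : ℤ} (h2 : V.IntUnit (2 : K))
    (hx : V.IntUnit x) (hxc : V.ValGe t (x ^ 2 - c)) (ht : 1 ≤ t) :
    V.ValGe (t + 1) (sqrtNewtonStep c x ^ 2 - c) := by
  have hd := hxc.div_of_intUnit (h2.mul hx)
  have hsq : sqrtNewtonStep c x ^ 2 - c = (x ^ 2 - c) / (2 * x) * ((x ^ 2 - c) / (2 * x)) := by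
    rw [sqrtNewtonStep]
    field_simp [h2.1, hx.1]
    ring
  rw [hsq]
  exact (hd.mul hd).mono (by omega)

lemma intUnit_sqrtNewtonStep {c x : K} {t : ℤ} (h2 : V.IntUnit (2 : K)) (hx : V.IntUnit x)
    (hxc : V.ValGe t (x ^ 2 - c)) (ht : 1 ≤ t) : V.IntUnit (sqrtNewtonStep c x) := by
  simpa using hx.add_of_valGe_one ((valGe_sqrtNewtonStep_sub h2 hx hxc).mono ht)

lemma sqrtNewtonStep_iterate {c u : K} (h2 : V.IntUnit (2 : K)) (hu : V.IntUnit u)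
    (huc : V.ValGe 1 (u ^ 2 - c)) (n : ℕ) :
    V.IntUnit ((sqrtNewtonStep c)^[n] u) ∧
      V.ValGe (n + 1) (((sqrtNewtonStep c)^[n] u) ^ 2 - c) := by
  induction n with
  | zero => simpa using ⟨hu, huc⟩
  | succ n ih =>
    rw [Function.iterate_succ_apply']
    have hn : (1 : ℤ) ≤ n + 1 := by omega
    exact ⟨intUnit_sqrtNewtonStep h2 ih.1 ih.2 hn,
      by simpa using valGe_sq_sqrtNewtonStep_sub h2 ih.1 ih.2 hn⟩

lemma cauchy_of_valGe_succ_sub {f : ℕ → K} (hf : ∀ n : ℕ, V.ValGe (n + 1) (f (n + 1) - f n))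
    (M : ℤ) : ∃ N : ℕ, ∀ m n : ℕ, N ≤ m → N ≤ n → V.ValGe M (f m - f n) := by
  have hgap : ∀ p k : ℕ, V.ValGe (p + 1) (f (p + k) - f p) := by
    intro p k
    induction k with
    | zero => simp [valGe_zero]
    | succ k ih =>
      simpa [← add_assoc] using ((hf (p + k)).mono (by push_cast; omega)).add ih
  refine ⟨M.toNat, fun m n hm hn => ?_⟩
  obtain h | h := le_total n m
  · obtain ⟨k, rfl⟩ := Nat.exists_eq_add_of_le h
    exact (hgap n k).mono (by omega)
  · obtain ⟨k, rfl⟩ := Nat.exists_eq_add_of_le h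
    simpa using (hgap m k).neg.mono (by omega)

lemma sq_eq_of_tendsto {f : ℕ → K} {c L : K} (hf : ∀ n, V.ValGe 0 (f n))
    (hfc : ∀ n : ℕ, V.ValGe (n + 1) (f n ^ 2 - c))
    (hL : ∀ M : ℤ, ∃ N : ℕ, ∀ n, N ≤ n → V.ValGe M (f n - L)) : L ^ 2 = c := by
  refine sub_eq_zero.mp (eq_zero_of_forall_valGe (V := V) fun M => ?_)
  obtain ⟨N, hN⟩ := hL (max M 0)
  set n := max N M.toNat
  have hfL := hN n (le_max_left _ _)
  have hsum : V.ValGe 0 (f n + L) := by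
    rw [show f n + L = f n + f n - (f n - L) by ring]
    exact ((hf n).add (hf n)).sub (hfL.mono (le_max_right _ _))
  rw [show L ^ 2 - c = (f n ^ 2 - c) - (f n - L) * (f n + L) by ring]
  exact ((hfc n).mono (by omega)).sub ((hfL.mul hsum).mono (by omega))

theorem exists_sq_eq (hcomp : V.IsComplete) (h2 : V.IntUnit (2 : K)) {u c : K}
    (hu : V.IntUnit u) (huc : V.ValGe 1 (u ^ 2 - c)) : ∃ x, x ^ 2 = c := by
  have hf := sqrtNewtonStep_iterate h2 hu huc
  obtain ⟨L, hL⟩ := hcomp (fun n => (sqrtNewtonStep c)^[n] u)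
    (cauchy_of_valGe_succ_sub fun n => by
      rw [Function.iterate_succ_apply']
      exact valGe_sqrtNewtonStep_sub h2 (hf n).1 (hf n).2)
  exact ⟨L, sq_eq_of_tendsto (fun n => (hf n).1.valGe_zero) (fun n => (hf n).2) hL⟩

theorem exists_root_of_maxIdeal (hcomp : V.IsComplete) (h2 : V.IntUnit (2 : K)) {α r u : K}
    (hα : V.IntUnit α) (hu : V.IntUnit u) (h : V.MaxIdeal (α * u ^ 2 + r)) :
    ∃ y ≠ 0, α * y ^ 2 + r = 0 := by
  have h : V.ValGe 1 (α * u ^ 2 + r) := h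
  obtain ⟨y, hy⟩ := exists_sq_eq hcomp h2 hu (c := -r / α) (by
    convert h.div_of_intUnit hα using 1
    field_simp [hα.1]
    ring)
  refine ⟨y, ?_, by rw [hy]; field_simp [hα.1]; ring⟩
  rintro rfl
  rw [zero_pow two_ne_zero, eq_comm, div_eq_zero_iff, neg_eq_zero] at hy
  have hr : r = 0 := hy.resolve_right hα.1
  exact (hα.mul (hu.mul hu)).not_valGe_one (by simpa [hr, sq, mul_assoc] using h)

end DVal

/-- if `a, b ∈ O_K^×` and `⟨1,-a,-b,ab⟩` is anisotropic over `K`, then the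
residue form `⟨1,-ā,-b̄,āb̄⟩` is anisotropic over the residue field `k`: for lifts
`e₀,…,e₃ ∈ O_K` not all in `m_K`, the value `e₀² - a·e₁² - b·e₂² + ab·e₃²` is not in `m_K`. -/
theorem stmt_12 (K : Type) [Field K] (V : DVal K)
    (hcomp : V.IsComplete) (hchar : V.ResCharNeTwo)
    (a b : K) (ha0 : a ≠ 0) (hva : V.ν a = 0) (hb0 : b ≠ 0) (hvb : V.ν b = 0)
    (haniso : QAniso a b) :
    ∀ e₀ e₁ e₂ e₃ : K, V.Int e₀ → V.Int e₁ → V.Int e₂ → V.Int e₃ →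
      ¬ (V.MaxIdeal e₀ ∧ V.MaxIdeal e₁ ∧ V.MaxIdeal e₂ ∧ V.MaxIdeal e₃) →
      ¬ V.MaxIdeal (e₀ ^ 2 - a * e₁ ^ 2 - b * e₂ ^ 2 + a * b * e₃ ^ 2) := by
  intro e₀ e₁ e₂ e₃ h₀ h₁ h₂ h₃ hnot hQ
  have ha : V.IntUnit a := ⟨ha0, hva⟩
  have hb : V.IntUnit b := ⟨hb0, hvb⟩
  simp only [not_and_or] at hnot
  rcases hnot with h | h | h | h
  · obtain ⟨y, hy0, hy⟩ := DVal.exists_root_of_maxIdeal hcomp hchar DVal.intUnit_one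
      (.of_int_of_not_maxIdeal h₀ h) (r := -a * e₁ ^ 2 - b * e₂ ^ 2 + a * b * e₃ ^ 2)
      (by convert hQ using 1; ring)
    exact hy0 (haniso y e₁ e₂ e₃ (by linear_combination hy)).1
  · obtain ⟨y, hy0, hy⟩ := DVal.exists_root_of_maxIdeal hcomp hchar ha.neg
      (.of_int_of_not_maxIdeal h₁ h) (r := e₀ ^ 2 - b * e₂ ^ 2 + a * b * e₃ ^ 2)
      (by convert hQ using 1; ring)
    exact hy0 (haniso e₀ y e₂ e₃ (by linear_combination hy)).2.1
  · obtain ⟨y, hy0, hy⟩ := DVal.exists_root_of_maxIdeal hcomp hchar hb.neg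
      (.of_int_of_not_maxIdeal h₂ h) (r := e₀ ^ 2 - a * e₁ ^ 2 + a * b * e₃ ^ 2)
      (by convert hQ using 1; ring)
    exact hy0 (haniso e₀ e₁ y e₃ (by linear_combination hy)).2.2.1
  · obtain ⟨y, hy0, hy⟩ := DVal.exists_root_of_maxIdeal hcomp hchar (ha.mul hb)
      (.of_int_of_not_maxIdeal h₃ h) (r := e₀ ^ 2 - a * e₁ ^ 2 - b * e₂ ^ 2)
      (by convert hQ using 1; ring)
    exact hy0 (haniso e₀ e₁ e₂ y (by linear_combination hy)).2.2.2
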